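/- Let α ≥ 0. The α-harmonic Green function G_α(z,w) = −(1−z w̄)^α h(φ(z,w)) of the unit disc satisfies, for all z, w ∈ D with z ≠ w, the estimate |G_α(z,w)| ≤ 2^α (1−|z|²)^α · log( |(1−z̄w)/(z−w)|² ). -/

import Mathlib

open Complex MeasureTheory Metric Real Set intervalIntegral

noncomputable section

/-- The open unit disc in the complex plane. -/
def unitDisc : Set ℂ := Metric.ball 0 1

/-- The unit circle in the complex plane. -/
def unitCircle : Set ℂ := Metric.sphere 0 1

/-- The Wirtinger derivative `∂f/∂z = (1/2)(f_x - i f_y)`. -/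
def wderiv (f : ℂ → ℂ) (z : ℂ) : ℂ :=
  (fderiv ℝ f z 1 - Complex.I * fderiv ℝ f z Complex.I) / 2

/-- The conjugate Wirtinger derivative `∂f/∂z̄ = (1/2)(f_x + i f_y)`. -/
def wderivBar (f : ℂ → ℂ) (z : ℂ) : ℂ :=
  (fderiv ℝ f z 1 + Complex.I * fderiv ℝ f z Complex.I) / 2

/-- `‖D_f(z)‖ = |f_z(z)| + |f_z̄(z)|`, the operator norm of the real Jacobian. -/
def jacNorm (f : ℂ → ℂ) (z : ℂ) : ℝ :=
  ‖wderiv f z‖ + ‖wderivBar f z‖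

/-- `f` is α-harmonic on the unit disc: `∂/∂z[(1-|z|²)^{-α} ∂f/∂z̄] = 0` on `𝔻`. -/
def IsAlphaHarmonic (α : ℝ) (f : ℂ → ℂ) : Prop :=
  ∀ z ∈ unitDisc,
    wderiv (fun w => (((1 - ‖w‖ ^ 2) ^ (-α) : ℝ) : ℂ) * wderivBar f w) z = 0

/-- The α-harmonic Poisson kernel `P_α(z) = (1-|z|²)^{α+1}/((1-z)(1-z̄)^{α+1})`. -/
def alphaPoissonKernel (α : ℝ) (z : ℂ) : ℂ :=
  (((1 - ‖z‖ ^ 2) ^ (α + 1) : ℝ) : ℂ) /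
    ((1 - z) * (1 - (starRingEnd ℂ) z) ^ ((α : ℂ) + 1))

/-- The Poisson-type integral `P_α[f*](z) = (1/2π) ∫₀^{2π} P_α(z e^{-iθ}) f*(e^{iθ}) dθ`. -/
def alphaPoissonIntegral (α : ℝ) (fstar : ℂ → ℂ) (z : ℂ) : ℂ :=
  (1 / (2 * Real.pi) : ℝ) • ∫ θ in (0:ℝ)..(2 * Real.pi),
    alphaPoissonKernel α (z * Complex.exp (-(θ : ℂ) * Complex.I)) *
      fstar (Complex.exp ((θ : ℂ) * Complex.I))

/-- The ordinary Poisson kernel `P(z) = (1-|z|²)/|1-z|²`. -/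
def poissonKernelR (z : ℂ) : ℝ := (1 - ‖z‖ ^ 2) / ‖1 - z‖ ^ 2

/-- `h(s) = ∫₀^s t^α/(1-t) dt`. -/
def greenH (α : ℝ) (s : ℝ) : ℝ := ∫ t in (0:ℝ)..s, t ^ α / (1 - t)

/-- `φ(z,w) = (1-|z|²)(1-|w|²)/|1 - z w̄|²`. -/
def greenPhi (z w : ℂ) : ℝ :=
  (1 - ‖z‖ ^ 2) * (1 - ‖w‖ ^ 2) /
    ‖1 - z * (starRingEnd ℂ) w‖ ^ 2

/-- The α-harmonic Green function `G_α(z,w) = -(1 - z w̄)^α h(φ(z,w))`. -/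
def greenFn (α : ℝ) (z w : ℂ) : ℂ :=
  -(1 - z * (starRingEnd ℂ) w) ^ (α : ℂ) * ((greenH α (greenPhi z w) : ℝ) : ℂ)

/-- `G[g](z) = ∫_𝔻 G_α(z,w) g(w) dA(w)` with `dA` the normalized area measure. -/
def greenIntegral (α : ℝ) (g : ℂ → ℂ) (z : ℂ) : ℂ :=
  (1 / Real.pi : ℝ) • ∫ w in unitDisc, greenFn α z w * g w

/-- `‖f*‖_∞ = sup_{ζ ∈ 𝕋} |f*(ζ)|`. -/
def supCircle (fstar : ℂ → ℂ) : ℝ := ⨆ ζ ∈ unitCircle, ‖fstar ζ‖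

/-- `‖g‖_∞ = sup_{z ∈ 𝔻} |g(z)|`. -/
def supDisc (g : ℂ → ℂ) : ℝ := ⨆ z ∈ unitDisc, ‖g z‖

/-- The Laplacian of a real-valued function: `Δu = u_{xx} + u_{yy}`. -/
def lapR (u : ℂ → ℝ) (z : ℂ) : ℝ :=
  fderiv ℝ (fun w => fderiv ℝ u w 1) z 1 +
    fderiv ℝ (fun w => fderiv ℝ u w Complex.I) z Complex.I

/-!
Write `A = |1 - z w̄|` and `s = φ(z,w)`. The identity `A² = (1-|z|²)(1-|w|²) + |z-w|²` gives
`1 - s = |z-w|²/A²`, so the logarithm on the right is `-log (1-s) = ∫₀^s dt/(1-t)`. Since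
`t^α ≤ s^α` on `[0,s]`, `|G_α(z,w)| = A^α h(s) ≤ (A s)^α (-log (1-s))`, and
`A s = (1-|z|²)(1-|w|²)/A ≤ 2(1-|z|²)` because `A ≥ 1 - |w|`.
-/

open ComplexConjugate

theorem integral_one_div_one_sub {s : ℝ} (hs : s < 1) :
    ∫ t in (0 : ℝ)..s, 1 / (1 - t) = -Real.log (1 - s) := by
  have h0 : (0 : ℝ) ∉ uIcc (1 - s) (1 - 0) := by
    rw [sub_zero, mem_uIcc]; rintro (⟨h, -⟩ | ⟨h, -⟩) <;> linarith
  rw [intervalIntegral.integral_comp_sub_left (fun t => 1 / t), integral_one_div h0, sub_zero,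
    Real.log_div one_ne_zero (by linarith), Real.log_one, zero_sub]

theorem intervalIntegrable_rpow_div_one_sub {α s : ℝ} (hα : 0 ≤ α) (hs0 : 0 ≤ s) (hs1 : s < 1) :
    IntervalIntegrable (fun t : ℝ => t ^ α / (1 - t)) volume 0 s := by
  refine ContinuousOn.intervalIntegrable ?_
  rw [uIcc_of_le hs0]
  refine ContinuousOn.div (fun t _ => ?_) (by fun_prop) fun t ht => ?_
  · exact (Real.continuousAt_rpow_const t α (Or.inr hα)).continuousWithinAt
  · linarith [ht.2]

theorem intervalIntegrable_one_div_one_sub {s : ℝ} (hs0 : 0 ≤ s) (hs1 : s < 1) :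
    IntervalIntegrable (fun t : ℝ => 1 / (1 - t)) volume 0 s := by
  simpa using intervalIntegrable_rpow_div_one_sub le_rfl hs0 hs1

theorem greenH_nonneg {α s : ℝ} (hs0 : 0 ≤ s) (hs1 : s < 1) : 0 ≤ greenH α s :=
  intervalIntegral.integral_nonneg hs0 fun t ht =>
    div_nonneg (Real.rpow_nonneg ht.1 α) (by linarith [ht.2])

theorem greenH_le_rpow_mul_neg_log {α s : ℝ} (hα : 0 ≤ α) (hs0 : 0 ≤ s) (hs1 : s < 1) :
    greenH α s ≤ s ^ α * -Real.log (1 - s) := by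
  calc greenH α s ≤ ∫ t in (0 : ℝ)..s, s ^ α * (1 / (1 - t)) := by
        refine intervalIntegral.integral_mono_on hs0 (intervalIntegrable_rpow_div_one_sub hα hs0 hs1)
          ((intervalIntegrable_one_div_one_sub hs0 hs1).const_mul _) fun t ht => ?_
        rw [mul_one_div]
        have : 0 < 1 - t := by linarith [ht.2]
        exact div_le_div_of_nonneg_right (Real.rpow_le_rpow ht.1 ht.2 hα) this.le
    _ = s ^ α * -Real.log (1 - s) := by
        rw [intervalIntegral.integral_const_mul, integral_one_div_one_sub hs1]

theorem norm_one_sub_mul_conj_sq (z w : ℂ) :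
    ‖1 - z * conj w‖ ^ 2 = (1 - ‖z‖ ^ 2) * (1 - ‖w‖ ^ 2) + ‖z - w‖ ^ 2 := by
  simp only [Complex.sq_norm]
  apply Complex.ofReal_injective
  push_cast
  simp only [← Complex.mul_conj, map_sub, map_mul, map_one, Complex.conj_conj]
  ring

theorem norm_one_sub_conj_mul (z w : ℂ) : ‖1 - conj z * w‖ = ‖1 - z * conj w‖ := by
  rw [← Complex.norm_conj (1 - z * conj w)]
  simp

theorem norm_one_sub_mul_conj_pos {z w : ℂ} (hz : ‖z‖ < 1) (hw : ‖w‖ < 1) :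
    0 < ‖1 - z * conj w‖ := by
  rw [norm_pos_iff, sub_ne_zero]
  intro h
  have : ‖z * conj w‖ < 1 := by
    rw [norm_mul, Complex.norm_conj]
    nlinarith [norm_nonneg z, norm_nonneg w]
  simp [← h] at this

section greenPhi

variable {z w : ℂ}

theorem greenPhi_nonneg (hz : ‖z‖ < 1) (hw : ‖w‖ < 1) : 0 ≤ greenPhi z w := by
  rw [greenPhi]
  have : 0 ≤ 1 - ‖z‖ ^ 2 := by nlinarith [norm_nonneg z]
  have : 0 ≤ 1 - ‖w‖ ^ 2 := by nlinarith [norm_nonneg w]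
  positivity

theorem one_sub_greenPhi (hz : ‖z‖ < 1) (hw : ‖w‖ < 1) :
    1 - greenPhi z w = ‖z - w‖ ^ 2 / ‖1 - z * conj w‖ ^ 2 := by
  have hA := norm_one_sub_mul_conj_pos hz hw
  rw [greenPhi, eq_div_iff (by positivity), sub_mul, div_mul_cancel₀ _ (by positivity),
    norm_one_sub_mul_conj_sq]
  ring

theorem greenPhi_lt_one (hz : ‖z‖ < 1) (hw : ‖w‖ < 1) (hzw : z ≠ w) : greenPhi z w < 1 := by
  have hA := norm_one_sub_mul_conj_pos hz hw
  have hzw' : 0 < ‖z - w‖ := norm_pos_iff.2 (sub_ne_zero.2 hzw)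
  have : 0 < 1 - greenPhi z w := by
    rw [one_sub_greenPhi hz hw]
    positivity
  linarith

theorem neg_log_one_sub_greenPhi (hz : ‖z‖ < 1) (hw : ‖w‖ < 1) :
    -Real.log (1 - greenPhi z w) = Real.log (‖(1 - conj z * w) / (z - w)‖ ^ 2) := by
  rw [one_sub_greenPhi hz hw, norm_div, norm_one_sub_conj_mul, div_pow, ← Real.log_inv, inv_div]

-- `|1 - z w̄| ≥ 1 - |w|`, so `(1 - |w|²)/|1 - z w̄| ≤ 1 + |w| ≤ 2`.
theorem norm_one_sub_mul_conj_mul_greenPhi_le (hz : ‖z‖ < 1) (hw : ‖w‖ < 1) :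
    ‖1 - z * conj w‖ * greenPhi z w ≤ 2 * (1 - ‖z‖ ^ 2) := by
  have hA := norm_one_sub_mul_conj_pos hz hw
  have hlow : 1 - ‖w‖ ≤ ‖1 - z * conj w‖ := by
    have := norm_sub_norm_le (1 : ℂ) (z * conj w)
    rw [norm_one, norm_mul, Complex.norm_conj] at this
    nlinarith [norm_nonneg w, norm_nonneg z]
  have hzpos : 0 ≤ 1 - ‖z‖ ^ 2 := by nlinarith [norm_nonneg z]
  have : 1 - ‖w‖ ^ 2 ≤ 2 * ‖1 - z * conj w‖ := by nlinarith [norm_nonneg w]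
  calc ‖1 - z * conj w‖ * greenPhi z w
      = (1 - ‖z‖ ^ 2) * ((1 - ‖w‖ ^ 2) / ‖1 - z * conj w‖) := by
        rw [greenPhi]; field_simp
    _ ≤ (1 - ‖z‖ ^ 2) * 2 := by
        gcongr
        rw [div_le_iff₀ hA]; linarith
    _ = 2 * (1 - ‖z‖ ^ 2) := mul_comm _ _

end greenPhi

theorem norm_greenFn {α : ℝ} (z w : ℂ) (hs0 : 0 ≤ greenPhi z w) (hs1 : greenPhi z w < 1) :
    ‖greenFn α z w‖ = ‖1 - z * conj w‖ ^ α * greenH α (greenPhi z w) := by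
  rw [greenFn, norm_mul, norm_neg, norm_cpow_real, Complex.norm_real, Real.norm_eq_abs,
    abs_of_nonneg (greenH_nonneg hs0 hs1)]

/-- estimate for the α-harmonic Green function. -/
theorem greenFn_abs_le
    (α : ℝ) (hα : 0 ≤ α) (z w : ℂ) (hz : z ∈ unitDisc) (hw : w ∈ unitDisc) (hzw : z ≠ w) :
    ‖greenFn α z w‖ ≤
      (2 : ℝ) ^ α * (1 - ‖z‖ ^ 2) ^ α *
        Real.log (‖(1 - (starRingEnd ℂ) z * w) / (z - w)‖ ^ 2) := by
  rw [unitDisc, mem_ball_zero_iff] at hz hw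
  have hs0 := greenPhi_nonneg hz hw
  have hs1 := greenPhi_lt_one hz hw hzw
  have hA := norm_one_sub_mul_conj_pos hz hw
  have hlog : 0 ≤ -Real.log (1 - greenPhi z w) :=
    neg_nonneg.2 (Real.log_nonpos (by linarith) (by linarith))
  calc ‖greenFn α z w‖
      ≤ ‖1 - z * conj w‖ ^ α * (greenPhi z w ^ α * -Real.log (1 - greenPhi z w)) := by
        rw [norm_greenFn z w hs0 hs1]
        gcongr
        exact greenH_le_rpow_mul_neg_log hα hs0 hs1
    _ = (‖1 - z * conj w‖ * greenPhi z w) ^ α * -Real.log (1 - greenPhi z w) := by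
        rw [Real.mul_rpow hA.le hs0, mul_assoc]
    _ ≤ (2 * (1 - ‖z‖ ^ 2)) ^ α * -Real.log (1 - greenPhi z w) := by
        have := norm_one_sub_mul_conj_mul_greenPhi_le hz hw
        gcongr
    _ = _ := by
        rw [Real.mul_rpow zero_le_two (by nlinarith [norm_nonneg z]),
          neg_log_one_sub_greenPhi hz hw]
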